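/- Let 0 < α < d, f ∈ L¹(ℝ^d), and let B = B(z,r) be a ball with x ∈ closure(B) attaining the supremum defining the uncentered fractional maximal function M̃_α f(x). Then for every h ∈ ℝ^d, M̃_α f(x+h) ≥ (r+|h|)^α ⨍_{B(z+h, r+|h|)} |f(y)| dy, and consequently limsup_{h→0} (M̃_α f(x) - M̃_α f(x+h)) / |h| ≤ (d - α) r^{α-1} ⨍_{B(z,r)} |f(y)| dy. -/

import Mathlib

/-! Since `B(z,r) ⊆ B(z+h, r+‖h‖)` and `x + h` lies in the closure of the larger ball,
`M̃_α f(x+h) ≥ (r+‖h‖)^α ⨍_{B(z+h,r+‖h‖)} |f| ≥ (r+‖h‖)^(α-d) · r^d ⨍_{B(z,r)} |f|`, whereas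
`M̃_α f(x) = r^(α-d) · r^d ⨍_{B(z,r)} |f|`. So the difference quotient at `x` is dominated by
`-(r^d ⨍_{B(z,r)} |f|)` times the difference quotient of `t ↦ (r+t)^(α-d)` at `t = 0`, whose
limit is `(α-d) r^(α-d-1)`. -/

open MeasureTheory Filter

/-- The uncentered fractional Hardy–Littlewood maximal function, with values in
`ℝ≥0∞`: `M̃_α f(x) = sup { r^α ⨍_B |f| : B = B(z,r), r > 0, x ∈ closure B }`. -/
noncomputable def uncenteredFracMax {d : ℕ} (α : ℝ)
    (f : EuclideanSpace ℝ (Fin d) → ℝ) (x : EuclideanSpace ℝ (Fin d)) : ENNReal :=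
  ⨆ (z : EuclideanSpace ℝ (Fin d)) (r : ℝ) (_ : 0 < r) (_ : x ∈ closure (Metric.ball z r)),
    ENNReal.ofReal (r ^ α * ⨍ y in Metric.ball z r, |f y|)

open Topology Metric

theorem Real.limsup_le_of_forall_eventually_le_add {ι : Type*} {l : Filter ι} {u : ι → ℝ}
    {L : ℝ} (hL : 0 ≤ L) (h : ∀ ε > 0, ∀ᶠ i in l, u i ≤ L + ε) : limsup u l ≤ L := by
  by_cases hcob : IsCoboundedUnder (· ≤ ·) l u
  · exact le_of_forall_pos_le_add fun ε hε => limsup_le_of_le hcob (h ε hε)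
  · rw [Real.limsup_of_not_isCoboundedUnder hcob]
    exact hL

theorem limsup_toReal_sub_div_norm_le {E : Type*} [NormedAddCommGroup E] {m : E → ENNReal}
    {x : E} {ψ : E → ℝ} {L : ℝ} (hL : 0 ≤ L) (hψ : ∀ h, ENNReal.ofReal (ψ h) ≤ m (x + h))
    (hlim : Tendsto (fun h => ((m x).toReal - ψ h) / ‖h‖) (𝓝[≠] 0) (𝓝 L)) :
    limsup (fun h => ((m x).toReal - (m (x + h)).toReal) / ‖h‖) (𝓝[≠] 0) ≤ L := by
  rcases ENNReal.toReal_nonneg.eq_or_lt with hzero | hpos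
  · refine Real.limsup_le_of_forall_eventually_le_add hL fun ε hε => .of_forall fun h => ?_
    rw [← hzero, zero_sub, neg_div]
    linarith [div_nonneg (m (x + h)).toReal_nonneg (norm_nonneg h)]
  by_cases htop : ∃ᶠ h in 𝓝[≠] 0, m (x + h) = ⊤
  · -- the junk value `⊤.toReal = 0` makes the difference quotient blow up like `1 / ‖h‖`
    rw [Real.limsup_of_not_isBoundedUnder]
    · exact hL
    rintro ⟨b, hb⟩
    have hblow : Tendsto (fun h : E => (m x).toReal / ‖h‖) (𝓝[≠] 0) atTop :=
      tendsto_norm_nhdsNE_zero.inv_tendsto_nhdsGT_zero.const_mul_atTop hpos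
    obtain ⟨h, hh, hle, hgt⟩ :=
      (htop.and_eventually ((eventually_map.mp hb).and (hblow.eventually_gt_atTop b))).exists
    simp only [hh, ENNReal.toReal_top, sub_zero] at hle
    exact hgt.not_ge hle
  · refine Real.limsup_le_of_forall_eventually_le_add hL fun ε hε => ?_
    filter_upwards [not_frequently.mp htop, hlim.eventually_le_const (lt_add_of_pos_right L hε)]
      with h hfin hlt
    refine le_trans ?_ hlt
    gcongr
    exact (ENNReal.ofReal_le_iff_le_toReal hfin).mp (hψ h)

theorem tendsto_rpow_add_sub_rpow_div {r : ℝ} (hr : 0 < r) (p : ℝ) :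
    Tendsto (fun t => ((r + t) ^ p - r ^ p) / t) (𝓝[≠] 0) (𝓝 (p * r ^ (p - 1))) := by
  have hderiv : HasDerivAt (fun t : ℝ => (r + t) ^ p) (p * r ^ (p - 1)) 0 := by
    simpa using ((hasDerivAt_id (0 : ℝ)).const_add r).rpow_const (p := p)
      (.inl (by simpa using hr.ne'))
  convert hasDerivAt_iff_tendsto_slope.mp hderiv using 2 with t
  simp [slope_def_field]

theorem add_mem_closure_ball_add {E : Type*} [NormedAddCommGroup E] [NormedSpace ℝ E]
    {x z : E} {r : ℝ} (hr : 0 < r) (hx : x ∈ closure (ball z r)) (h : E) :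
    x + h ∈ closure (ball (z + h) (r + ‖h‖)) := by
  rw [closure_ball _ hr.ne'] at hx
  rw [closure_ball _ (by positivity), mem_closedBall, dist_add_right]
  exact le_add_of_le_of_nonneg hx (norm_nonneg h)

section Averages

variable {E : Type*} [NormedAddCommGroup E] [NormedSpace ℝ E] [MeasurableSpace E] [BorelSpace E]
  [FiniteDimensional ℝ E] {μ : Measure E} [μ.IsAddHaarMeasure]

open Module

theorem pow_finrank_mul_setAverage_ball (g : E → ℝ) (w : E) {t : ℝ} (ht : 0 < t) :
    t ^ finrank ℝ E * ⨍ y in ball w t, g y ∂μ =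
      (μ.real (ball 0 1))⁻¹ * ∫ y in ball w t, g y ∂μ := by
  rw [setAverage_eq, smul_eq_mul, measureReal_def, Measure.addHaar_ball_of_pos μ w ht,
    ENNReal.toReal_mul, ENNReal.toReal_ofReal (by positivity), ← measureReal_def, mul_inv,
    ← mul_assoc, mul_inv_cancel_left₀ (by positivity)]

theorem pow_finrank_mul_setAverage_ball_le {g : E → ℝ} (hg : 0 ≤ g) {z w : E} {r s : ℝ}
    (hr : 0 < r) (hs : 0 < s) (hsub : ball z r ⊆ ball w s) (hint : IntegrableOn g (ball w s) μ) :
    r ^ finrank ℝ E * ⨍ y in ball z r, g y ∂μ ≤ s ^ finrank ℝ E * ⨍ y in ball w s, g y ∂μ := by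
  rw [pow_finrank_mul_setAverage_ball g z hr, pow_finrank_mul_setAverage_ball g w hs]
  exact mul_le_mul_of_nonneg_left (setIntegral_mono_set hint (.of_forall hg) hsub.eventuallyLE)
    (by positivity)

end Averages

theorem ofReal_le_uncenteredFracMax {d : ℕ} (α : ℝ) (f : EuclideanSpace ℝ (Fin d) → ℝ)
    {x z : EuclideanSpace ℝ (Fin d)} {r : ℝ} (hr : 0 < r) (hx : x ∈ closure (ball z r)) :
    ENNReal.ofReal (r ^ α * ⨍ y in ball z r, |f y|) ≤ uncenteredFracMax α f x :=
  le_iSup_of_le z <| le_iSup_of_le r <| le_iSup_of_le hr <| le_iSup_of_le hx le_rfl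

theorem statement6_general {d : ℕ} (α : ℝ) (hαd : α < d)
    (f : EuclideanSpace ℝ (Fin d) → ℝ) (hf : Integrable f)
    (x z : EuclideanSpace ℝ (Fin d)) (r : ℝ) (hr : 0 < r)
    (hx : x ∈ closure (Metric.ball z r))
    (hatt : ENNReal.ofReal (r ^ α * ⨍ y in Metric.ball z r, |f y|) =
      uncenteredFracMax α f x) :
    (∀ h : EuclideanSpace ℝ (Fin d),
        ENNReal.ofReal ((r + ‖h‖) ^ α * ⨍ y in Metric.ball (z + h) (r + ‖h‖), |f y|) ≤
          uncenteredFracMax α f (x + h)) ∧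
      limsup (fun h : EuclideanSpace ℝ (Fin d) =>
          ((uncenteredFracMax α f x).toReal - (uncenteredFracMax α f (x + h)).toReal) / ‖h‖)
        (nhdsWithin 0 {0}ᶜ) ≤
        (d - α) * r ^ (α - 1) * ⨍ y in Metric.ball z r, |f y| := by
  set A := ⨍ y in ball z r, |f y|
  have hA : 0 ≤ A := integral_nonneg fun y => abs_nonneg (f y)
  have lower (h : EuclideanSpace ℝ (Fin d)) :=
    ofReal_le_uncenteredFracMax α f (by positivity) (add_mem_closure_ball_add hr hx h)
  refine ⟨lower, ?_⟩
  have grow (h : EuclideanSpace ℝ (Fin d)) :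
      (r + ‖h‖) ^ (α - d) * (r ^ d * A) ≤
        (r + ‖h‖) ^ α * ⨍ y in ball (z + h) (r + ‖h‖), |f y| := by
    have hs : 0 < r + ‖h‖ := by positivity
    have hmono := pow_finrank_mul_setAverage_ball_le (z := z) (w := z + h)
      (fun y => abs_nonneg (f y)) hr hs (ball_subset_ball' (by rw [dist_self_add_right]))
      hf.abs.integrableOn
    rw [finrank_euclideanSpace_fin] at hmono
    calc (r + ‖h‖) ^ (α - d) * (r ^ d * A)
        ≤ (r + ‖h‖) ^ (α - d) * ((r + ‖h‖) ^ d * ⨍ y in ball (z + h) (r + ‖h‖), |f y|) :=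
          mul_le_mul_of_nonneg_left hmono (by positivity)
      _ = _ := by rw [← mul_assoc, ← Real.rpow_natCast, ← Real.rpow_add hs, sub_add_cancel]
  have hMx : (uncenteredFracMax α f x).toReal = r ^ (α - d) * (r ^ d * A) := by
    rw [← hatt, ENNReal.toReal_ofReal (by positivity), ← mul_assoc, ← Real.rpow_natCast,
      ← Real.rpow_add hr, sub_add_cancel]
  refine limsup_toReal_sub_div_norm_le (by have := hαd.le; positivity)
    (fun h => (ENNReal.ofReal_le_ofReal (grow h)).trans (lower h)) ?_
  have hnorm := (tendsto_norm_nhdsNE_zero (E := EuclideanSpace ℝ (Fin d))).mono_right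
    (nhdsGT_le_nhdsNE 0)
  have hslope := ((tendsto_rpow_add_sub_rpow_div hr (α - d)).comp hnorm).const_mul (-(r ^ d * A))
  convert hslope using 1
  · ext h
    simp only [hMx, Function.comp_apply]
    ring
  · congr 1
    rw [show α - d - 1 = (α - 1) + -(d : ℝ) by ring, Real.rpow_add hr, Real.rpow_neg hr.le,
      Real.rpow_natCast]
    field_simp
    ring

/-- if `B(z,r)` attains the supremum defining `M̃_α f(x)`, then for
every `h`, `M̃_α f(x+h) ≥ (r+|h|)^α ⨍_{B(z+h,r+|h|)} |f|`, and consequently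
`limsup_{h→0} (M̃_α f(x) - M̃_α f(x+h))/|h| ≤ (d-α) r^{α-1} ⨍_{B(z,r)} |f|`. -/
theorem statement6 {d : ℕ} (α : ℝ) (hα : 0 < α) (hαd : α < d)
    (f : EuclideanSpace ℝ (Fin d) → ℝ) (hf : Integrable f)
    (x z : EuclideanSpace ℝ (Fin d)) (r : ℝ) (hr : 0 < r)
    (hx : x ∈ closure (Metric.ball z r))
    (hatt : ENNReal.ofReal (r ^ α * ⨍ y in Metric.ball z r, |f y|) =
      uncenteredFracMax α f x) :
    (∀ h : EuclideanSpace ℝ (Fin d),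
        ENNReal.ofReal ((r + ‖h‖) ^ α * ⨍ y in Metric.ball (z + h) (r + ‖h‖), |f y|) ≤
          uncenteredFracMax α f (x + h)) ∧
      limsup (fun h : EuclideanSpace ℝ (Fin d) =>
          ((uncenteredFracMax α f x).toReal - (uncenteredFracMax α f (x + h)).toReal) / ‖h‖)
        (nhdsWithin 0 {0}ᶜ) ≤
        (d - α) * r ^ (α - 1) * ⨍ y in Metric.ball z r, |f y| :=
  statement6_general α hαd f hf x z r hr hx hatt
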